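/- Assume α·λ·c > (λ+δ)². Let ψ(x) = (r+α)·e^{rx} − (s+α)·e^{sx} and b = (1/(r−s))·ln( s²(s+α)/(r²(r+α)) ) (so that b > 0), and define Φ(x) = ψ(x)/ψ'(b) for 0 ≤ x ≤ b and Φ(x) = x − b + ψ(b)/ψ'(b) for x > b. Then Φ is continuously differentiable on (0,∞) and solves the quasi-variational inequality: for every x > 0, max{ c·Φ'(x) − (λ+δ)·Φ(x) + λ·∫₀ˣ Φ(x−y)·α·e^{−αy} dy , 1 − Φ'(x) } = 0. -/

import Mathlib

/-!
For a root ξ of the characteristic equation, the operator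
`c f' − (λ+δ) f + λ ∫₀ˣ f(x−y) α e^{−αy} dy` sends `(ξ+α) e^{ξx}` to `−λα e^{−αx}`, so on
`[0, b]`, where `Φ` is a multiple of `ψ = (r+α)e^{rx} − (s+α)e^{sx}`, the operator vanishes.
The point `b` is the inflection point of `ψ`: the condition `αλc > (λ+δ)²` makes `ψ''(0) < 0`,
hence `b > 0`, and `ψ'` decreases on `(-∞, b]`, so `Φ' ≥ Φ'(b) = 1` there. Beyond `b` the
function `Φ` is affine with slope 1, and since the operator vanishes at `b` its value at
`x = b + t` works out to `(δ/α)(1 − e^{−αt} − αt) ≤ 0`.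
-/

open Real Set intervalIntegral

theorem hasDerivAt_if_le {f g f' g' : ℝ → ℝ} {b : ℝ}
    (hf : ∀ x, HasDerivAt f (f' x) x) (hg : ∀ x, HasDerivAt g (g' x) x)
    (hv : f b = g b) (hd : f' b = g' b) (x : ℝ) :
    HasDerivAt (fun y => if y ≤ b then f y else g y) (if x ≤ b then f' x else g' x) x := by
  rcases lt_trichotomy x b with h | rfl | h
  · rw [if_pos h.le]
    refine (hf x).congr_of_eventuallyEq ?_
    filter_upwards [eventually_lt_nhds h] with y hy
    rw [if_pos hy.le]
  · rw [if_pos le_rfl]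
    have hleft : HasDerivWithinAt (fun y => if y ≤ x then f y else g y) (f' x) (Iic x) x :=
      (hf x).hasDerivWithinAt.congr (fun y hy => if_pos hy) (if_pos le_rfl)
    have hright : HasDerivWithinAt (fun y => if y ≤ x then f y else g y) (f' x) (Ici x) x := by
      refine hd ▸ (hg x).hasDerivWithinAt.congr (fun y hy => ?_) (by rw [if_pos le_rfl, hv])
      rcases (mem_Ici.mp hy).eq_or_lt with rfl | hlt
      · rw [if_pos le_rfl, hv]
      · rw [if_neg hlt.not_ge]
    simpa only [Iic_union_Ici, hasDerivWithinAt_univ] using hleft.union hright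
  · rw [if_neg h.not_ge]
    refine (hg x).congr_of_eventuallyEq ?_
    filter_upwards [eventually_gt_nhds h] with y hy
    rw [if_neg hy.not_ge]

theorem hasDerivAt_const_mul_exp_mul (a ξ x : ℝ) :
    HasDerivAt (fun y => a * exp (ξ * y)) (a * ξ * exp (ξ * x)) x := by
  have := ((hasDerivAt_id x).const_mul ξ).exp.const_mul a
  simpa [mul_comm, mul_left_comm, mul_assoc] using this

noncomputable def expConv (al : ℝ) (f : ℝ → ℝ) (x : ℝ) : ℝ :=
  ∫ y in (0:ℝ)..x, f (x - y) * (al * exp (-al * y))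

theorem expConv_eq (al : ℝ) (f : ℝ → ℝ) (x : ℝ) :
    expConv al f x = exp (-al * x) * ∫ u in (0:ℝ)..x, f u * (al * exp (al * u)) := by
  have h : ∀ y, f (x - y) * (al * exp (-al * y))
      = exp (-al * x) * (fun u => f u * (al * exp (al * u))) (x - y) := fun y => by
    rw [show -al * y = -al * x + al * (x - y) by ring, exp_add]; ring
  rw [expConv, integral_congr fun y _ => h y, integral_const_mul,
    integral_comp_sub_left (fun u => f u * (al * exp (al * u))), sub_self, sub_zero]

theorem expConv_eq_add (al : ℝ) {f : ℝ → ℝ} (hf : Continuous f) (b x : ℝ) :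
    expConv al f x = exp (-al * (x - b)) * expConv al f b
      + exp (-al * x) * ∫ u in b..x, f u * (al * exp (al * u)) := by
  have hint : ∀ a a',
      IntervalIntegrable (fun u => f u * (al * exp (al * u))) MeasureTheory.volume a a' :=
    fun _ _ => (by fun_prop : Continuous _).intervalIntegrable _ _
  rw [expConv_eq, expConv_eq, ← integral_add_adjacent_intervals (hint 0 b) (hint b x), mul_add,
    ← mul_assoc, ← exp_add]
  ring_nf

theorem expConv_congr {al x : ℝ} {f g : ℝ → ℝ} (hx : 0 ≤ x) (h : EqOn f g (Icc 0 x)) :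
    expConv al f x = expConv al g x := by
  refine integral_congr fun y hy => ?_
  rw [uIcc_of_le hx] at hy
  rw [h ⟨by linarith [hy.2], by linarith [hy.1]⟩]

theorem expConv_const_mul (al k : ℝ) (f : ℝ → ℝ) (x : ℝ) :
    expConv al (fun u => k * f u) x = k * expConv al f x := by
  simp only [expConv, mul_assoc, integral_const_mul]

theorem integral_affine_mul_exp {al : ℝ} (hal : al ≠ 0) (b k x : ℝ) :
    ∫ u in b..x, (u - b + k) * (al * exp (al * u))
      = (x - b + k - 1 / al) * exp (al * x) - (k - 1 / al) * exp (al * b) := by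
  have hderiv : ∀ u, HasDerivAt (fun u => (u - b + k - 1 / al) * exp (al * u))
      ((u - b + k) * (al * exp (al * u))) u := fun u => by
    have := ((((hasDerivAt_id u).sub_const b).add_const k).sub_const (1 / al)).mul
      (hasDerivAt_const_mul_exp_mul 1 al u)
    simp only [one_mul, id_eq] at this
    exact this.congr_deriv (by field_simp; ring)
  rw [integral_eq_sub_of_hasDerivAt (fun u _ => hderiv u)
    ((by fun_prop : Continuous _).intervalIntegrable _ _)]
  ring

section Psi

variable (al r s : ℝ)

noncomputable def psi (x : ℝ) : ℝ := (r + al) * exp (r * x) - (s + al) * exp (s * x)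

noncomputable def psi' (x : ℝ) : ℝ := r * (r + al) * exp (r * x) - s * (s + al) * exp (s * x)

noncomputable def psi'' (x : ℝ) : ℝ :=
  r ^ 2 * (r + al) * exp (r * x) - s ^ 2 * (s + al) * exp (s * x)

theorem hasDerivAt_psi (x : ℝ) : HasDerivAt (psi al r s) (psi' al r s x) x :=
  ((hasDerivAt_const_mul_exp_mul _ r x).sub (hasDerivAt_const_mul_exp_mul _ s x)).congr_deriv
    (by unfold psi'; ring)

theorem hasDerivAt_psi' (x : ℝ) : HasDerivAt (psi' al r s) (psi'' al r s x) x :=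
  ((hasDerivAt_const_mul_exp_mul _ r x).sub (hasDerivAt_const_mul_exp_mul _ s x)).congr_deriv
    (by unfold psi''; ring)

theorem continuous_psi : Continuous (psi al r s) :=
  continuous_iff_continuousAt.2 fun x => (hasDerivAt_psi al r s x).continuousAt

theorem continuous_psi' : Continuous (psi' al r s) :=
  continuous_iff_continuousAt.2 fun x => (hasDerivAt_psi' al r s x).continuousAt

theorem expConv_psi (x : ℝ) : expConv al (psi al r s) x = al * (exp (r * x) - exp (s * x)) := by
  have hderiv : ∀ u, HasDerivAt (fun u => al * exp ((r + al) * u) - al * exp ((s + al) * u))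
      (psi al r s u * (al * exp (al * u))) u := fun u =>
    ((hasDerivAt_const_mul_exp_mul al _ u).sub (hasDerivAt_const_mul_exp_mul al _ u)).congr_deriv
      (by simp only [psi, add_mul, exp_add]; ring)
  rw [expConv_eq, integral_eq_sub_of_hasDerivAt (fun u _ => hderiv u)
    (((continuous_psi al r s).mul (by fun_prop)).intervalIntegrable _ _)]
  simp only [add_mul, exp_add, mul_zero, exp_zero]
  rw [neg_mul, exp_neg]
  field_simp
  ring

variable {al r s}

theorem psi'_pos (hr : 0 < r) (hra : 0 < r + al) (hs : s < 0) (hsa : 0 < s + al) (x : ℝ) :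
    0 < psi' al r s x := by
  have : s * (s + al) * exp (s * x) < 0 :=
    mul_neg_of_neg_of_pos (mul_neg_of_neg_of_pos hs hsa) (exp_pos _)
  have : 0 < r * (r + al) * exp (r * x) := by positivity
  unfold psi'; linarith

theorem psi''_nonpos_of_le {b u : ℝ} (hsr : s < r) (hsa : 0 ≤ s + al) (hb : psi'' al r s b = 0)
    (hu : u ≤ b) : psi'' al r s u ≤ 0 := by
  have hexp : exp (r * (u - b)) ≤ exp (s * (u - b)) := exp_le_exp.2 (by nlinarith)
  have hsplit : ∀ ξ, exp (ξ * u) = exp (ξ * b) * exp (ξ * (u - b)) := fun ξ => by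
    rw [← exp_add]; ring_nf
  have hkey : r ^ 2 * (r + al) * exp (r * b) = s ^ 2 * (s + al) * exp (s * b) := by
    unfold psi'' at hb; linarith
  calc psi'' al r s u
      = s ^ 2 * (s + al) * exp (s * b) * (exp (r * (u - b)) - exp (s * (u - b))) := by
        rw [psi'', hsplit r, hsplit s]; linear_combination exp (r * (u - b)) * hkey
    _ ≤ 0 := mul_nonpos_of_nonneg_of_nonpos (by positivity) (by linarith)

theorem psi'_antitoneOn {b : ℝ} (hsr : s < r) (hsa : 0 ≤ s + al) (hb : psi'' al r s b = 0) :
    AntitoneOn (psi' al r s) (Iic b) := by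
  refine antitoneOn_of_deriv_nonpos (convex_Iic b) (continuous_psi' al r s).continuousOn
    (fun x _ => (hasDerivAt_psi' al r s x).differentiableAt.differentiableWithinAt) fun x hx => ?_
  rw [interior_Iic] at hx
  rw [(hasDerivAt_psi' al r s x).deriv]
  exact psi''_nonpos_of_le hsr hsa hb hx.le

end Psi

section Roots

variable {c lam del al r s : ℝ}

theorem psi''_zero_neg (hc : 0 < c) (hr : c * r ^ 2 - (lam + del - al * c) * r - al * del = 0)
    (hs : c * s ^ 2 - (lam + del - al * c) * s - al * del = 0) (hsr : s < r)
    (hcond : al * lam * c > (lam + del) ^ 2) : psi'' al r s 0 < 0 := by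
  have hvieta : c * (r + s) = lam + del - al * c := by
    have h : (r - s) * (c * (r + s) - (lam + del - al * c)) = 0 := by linear_combination hr - hs
    linarith [(mul_eq_zero.mp h).resolve_left (sub_ne_zero.2 hsr.ne')]
  have hneg : (lam + del) * (r + s) + al * del < 0 := by
    have : c * ((lam + del) * (r + s) + al * del) = (lam + del) ^ 2 - al * lam * c := by
      linear_combination (lam + del) * hvieta
    nlinarith
  have : c * psi'' al r s 0 = (r - s) * ((lam + del) * (r + s) + al * del) := by
    simp only [psi'', mul_zero, exp_zero, mul_one]
    linear_combination r * hr - s * hs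
  nlinarith

theorem psi_harmonic (hr : c * r ^ 2 - (lam + del - al * c) * r - al * del = 0)
    (hs : c * s ^ 2 - (lam + del - al * c) * s - al * del = 0) (x : ℝ) :
    c * psi' al r s x - (lam + del) * psi al r s x
      + lam * (al * (exp (r * x) - exp (s * x))) = 0 := by
  unfold psi psi'
  linear_combination exp (r * x) * hr - exp (s * x) * hs

/-- `psi_harmonic` at `b` combined with its derivative there, where `ψ''(b) = 0`. -/
theorem psi_relation (hr : c * r ^ 2 - (lam + del - al * c) * r - al * del = 0)
    (hs : c * s ^ 2 - (lam + del - al * c) * s - al * del = 0) {b : ℝ} (hb : psi'' al r s b = 0) :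
    (al * c - lam - del) * psi' al r s b = al * del * psi al r s b := by
  unfold psi psi'' psi' at *
  linear_combination (r + al) * exp (r * b) * hr - (s + al) * exp (s * b) * hs - c * hb

end Roots

section Inflection

variable {al r s b : ℝ}

theorem psi''_eq_zero (hsr : s < r) (hr : 0 < r ^ 2 * (r + al)) (hs : 0 < s ^ 2 * (s + al))
    (hb : b = 1 / (r - s) * log (s ^ 2 * (s + al) / (r ^ 2 * (r + al)))) : psi'' al r s b = 0 := by
  have hexp : exp ((r - s) * b) = s ^ 2 * (s + al) / (r ^ 2 * (r + al)) := by
    rw [hb, ← mul_assoc, mul_one_div_cancel (sub_ne_zero.2 hsr.ne'), one_mul,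
      exp_log (div_pos hs hr)]
  have : exp (r * b) = exp ((r - s) * b) * exp (s * b) := by rw [← exp_add]; ring_nf
  rw [psi'', this, hexp, ← mul_assoc, mul_div_cancel₀ _ hr.ne', sub_self]

theorem inflection_pos (hsr : s < r) (hr : 0 < r ^ 2 * (r + al)) (h0 : psi'' al r s 0 < 0)
    (hb : b = 1 / (r - s) * log (s ^ 2 * (s + al) / (r ^ 2 * (r + al)))) : 0 < b := by
  have hlt : r ^ 2 * (r + al) < s ^ 2 * (s + al) := by
    simpa [psi''] using h0
  rw [hb]
  exact mul_pos (one_div_pos.2 (sub_pos.2 hsr)) (log_pos ((one_lt_div hr).2 hlt))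

end Inflection

section Phi

variable {al r s b : ℝ}

variable (al r s b) in
noncomputable def Phi (x : ℝ) : ℝ :=
  if x ≤ b then psi al r s x / psi' al r s b else x - b + psi al r s b / psi' al r s b

theorem Phi_of_le {x : ℝ} (hx : x ≤ b) : Phi al r s b x = psi al r s x / psi' al r s b :=
  if_pos hx

theorem Phi_of_ge {x : ℝ} (hx : b ≤ x) :
    Phi al r s b x = x - b + psi al r s b / psi' al r s b := by
  rcases hx.eq_or_lt with rfl | hlt
  · rw [Phi_of_le le_rfl, sub_self, zero_add]
  · exact if_neg hlt.not_ge

theorem continuous_Phi : Continuous (Phi al r s b) :=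
  Continuous.if_le ((continuous_psi al r s).div_const _) (by fun_prop) continuous_id
    continuous_const fun x hx => by rw [hx, sub_self, zero_add]

theorem hasDerivAt_Phi (hD : psi' al r s b ≠ 0) (x : ℝ) :
    HasDerivAt (Phi al r s b) (if x ≤ b then psi' al r s x / psi' al r s b else 1) x :=
  hasDerivAt_if_le (fun y => (hasDerivAt_psi al r s y).div_const _)
    (fun y => ((hasDerivAt_id' y).sub_const b).add_const _) (by rw [sub_self, zero_add])
    (div_self hD) x

theorem deriv_Phi (hD : psi' al r s b ≠ 0) (x : ℝ) :
    deriv (Phi al r s b) x = if x ≤ b then psi' al r s x / psi' al r s b else 1 :=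
  (hasDerivAt_Phi hD x).deriv

theorem continuous_deriv_Phi (hD : psi' al r s b ≠ 0) : Continuous (deriv (Phi al r s b)) := by
  rw [funext (deriv_Phi hD)]
  exact Continuous.if_le ((continuous_psi' al r s).div_const _) continuous_const continuous_id
    continuous_const fun x hx => by rw [hx, div_self hD]

end Phi

noncomputable def generator (c lam del al : ℝ) (f : ℝ → ℝ) (x : ℝ) : ℝ :=
  c * deriv f x - (lam + del) * f x + lam * expConv al f x

section Generator

variable {c lam del al r s b x : ℝ}

theorem expConv_Phi_of_le (hx0 : 0 ≤ x) (hxb : x ≤ b) :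
    expConv al (Phi al r s b) x = al * (exp (r * x) - exp (s * x)) / psi' al r s b := by
  rw [expConv_congr (g := fun u => (psi' al r s b)⁻¹ * psi al r s u) hx0
    fun u hu => by rw [Phi_of_le (hu.2.trans hxb), div_eq_inv_mul], expConv_const_mul,
    expConv_psi, inv_mul_eq_div]

theorem generator_Phi_of_le (hr : c * r ^ 2 - (lam + del - al * c) * r - al * del = 0)
    (hs : c * s ^ 2 - (lam + del - al * c) * s - al * del = 0) (hD : psi' al r s b ≠ 0)
    (hx0 : 0 ≤ x) (hxb : x ≤ b) : generator c lam del al (Phi al r s b) x = 0 := by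
  rw [generator, deriv_Phi hD, if_pos hxb, Phi_of_le hxb, expConv_Phi_of_le hx0 hxb]
  linear_combination (psi' al r s b)⁻¹ * psi_harmonic hr hs x

theorem generator_Phi_of_gt (hr : c * r ^ 2 - (lam + del - al * c) * r - al * del = 0)
    (hs : c * s ^ 2 - (lam + del - al * c) * s - al * del = 0) (hal : al ≠ 0)
    (hD : psi' al r s b ≠ 0) (hb : psi'' al r s b = 0) (hb0 : 0 ≤ b) (hxb : b < x) :
    generator c lam del al (Phi al r s b) x
      = del / al * (1 - exp (-al * (x - b))) - del * (x - b) := by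
  set K := psi al r s b / psi' al r s b
  have hconv_b : lam * expConv al (Phi al r s b) b = (lam + del) * K - c := by
    have := generator_Phi_of_le hr hs hD hb0 le_rfl
    rw [generator, deriv_Phi hD, if_pos le_rfl, div_self hD, Phi_of_le le_rfl] at this
    linarith
  have hint : ∫ u in b..x, Phi al r s b u * (al * exp (al * u))
      = (x - b + K - 1 / al) * exp (al * x) - (K - 1 / al) * exp (al * b) := by
    rw [← integral_affine_mul_exp hal]
    refine integral_congr fun u hu => ?_
    rw [uIcc_of_le hxb.le] at hu
    rw [Phi_of_ge hu.1]
  have hK : del * K = c - lam / al - del / al := by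
    have := psi_relation hr hs hb
    simp only [K]
    field_simp
    linear_combination -this
  have h1 : exp (-al * x) * exp (al * x) = 1 := by rw [← exp_add]; ring_nf; exact exp_zero
  have h2 : exp (-al * x) * exp (al * b) = exp (-al * (x - b)) := by rw [← exp_add]; ring_nf
  rw [generator, deriv_Phi hD, if_neg hxb.not_ge, Phi_of_ge hxb.le,
    expConv_eq_add al continuous_Phi b x, hint]
  linear_combination lam * (x - b + K - 1 / al) * h1 - lam * (K - 1 / al) * h2
    + exp (-al * (x - b)) * hconv_b + (exp (-al * (x - b)) - 1) * hK

end Generator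

section QVI

variable {c lam del al r s b x : ℝ}

theorem generator_Phi_nonpos_of_gt (hr : c * r ^ 2 - (lam + del - al * c) * r - al * del = 0)
    (hs : c * s ^ 2 - (lam + del - al * c) * s - al * del = 0) (hdel : 0 ≤ del) (hal : 0 < al)
    (hD : psi' al r s b ≠ 0) (hb : psi'' al r s b = 0) (hb0 : 0 ≤ b) (hxb : b < x) :
    generator c lam del al (Phi al r s b) x ≤ 0 := by
  have hexp := add_one_le_exp (-al * (x - b))
  have hfactor : del / al * (1 - exp (-al * (x - b))) - del * (x - b)
      = del / al * (1 - exp (-al * (x - b)) - al * (x - b)) := by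
    field_simp
  rw [generator_Phi_of_gt hr hs hal.ne' hD hb hb0 hxb, hfactor]
  exact mul_nonpos_of_nonneg_of_nonpos (div_nonneg hdel hal.le) (by linarith)

theorem one_le_deriv_Phi (hsr : s < r) (hsa : 0 ≤ s + al) (hD : 0 < psi' al r s b)
    (hb : psi'' al r s b = 0) (hxb : x ≤ b) : 1 ≤ deriv (Phi al r s b) x := by
  rw [deriv_Phi hD.ne', if_pos hxb, one_le_div hD]
  exact psi'_antitoneOn hsr hsa hb hxb (mem_Iic.2 le_rfl) hxb

end QVI

theorem stmt_18_general (c lam del al r s b : ℝ) (Φ : ℝ → ℝ)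
    (hc : 0 < c) (hdel : 0 < del) (hal : 0 < al)
    (hr : c * r ^ 2 - (lam + del - al * c) * r - al * del = 0)
    (hs : c * s ^ 2 - (lam + del - al * c) * s - al * del = 0)
    (hs1 : -al < s) (hs2 : s < 0) (hr1 : 0 < r)
    (hcond : al * lam * c > (lam + del) ^ 2)
    (hb : b = (1 / (r - s)) * Real.log (s ^ 2 * (s + al) / (r ^ 2 * (r + al))))
    (hΦ : ∀ x, Φ x =
      if x ≤ b then
        ((r + al) * Real.exp (r * x) - (s + al) * Real.exp (s * x))
          / (r * (r + al) * Real.exp (r * b) - s * (s + al) * Real.exp (s * b))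
      else
        x - b + ((r + al) * Real.exp (r * b) - (s + al) * Real.exp (s * b))
          / (r * (r + al) * Real.exp (r * b) - s * (s + al) * Real.exp (s * b))) :
    0 < b ∧
    (∀ x > (0:ℝ), DifferentiableAt ℝ Φ x) ∧
    ContinuousOn (deriv Φ) (Set.Ioi 0) ∧
    ∀ x > (0:ℝ),
      max (c * deriv Φ x - (lam + del) * Φ x
          + lam * ∫ y in (0:ℝ)..x, Φ (x - y) * (al * Real.exp (-al * y)))
        (1 - deriv Φ x) = 0 := by
  have hra : 0 < r + al := by linarith
  have hsa : 0 < s + al := by linarith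
  have hsr : s < r := hs2.trans hr1
  have hD : 0 < psi' al r s b := psi'_pos hr1 hra hs2 hsa b
  have hr0 : 0 < r ^ 2 * (r + al) := by positivity
  have hb0 : 0 < b := inflection_pos hsr hr0 (psi''_zero_neg hc hr hs hsr hcond) hb
  have hinfl : psi'' al r s b = 0 := psi''_eq_zero hsr hr0 (mul_pos (sq_pos_of_neg hs2) hsa) hb
  obtain rfl : Φ = Phi al r s b := funext hΦ
  refine ⟨hb0, fun x _ => (hasDerivAt_Phi hD.ne' x).differentiableAt,
    (continuous_deriv_Phi hD.ne').continuousOn, fun x hx => ?_⟩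
  change max (generator c lam del al (Phi al r s b) x) (1 - deriv (Phi al r s b) x) = 0
  rcases le_or_gt x b with hxb | hxb
  · rw [generator_Phi_of_le hr hs hD.ne' hx.le hxb, max_eq_left]
    linarith [one_le_deriv_Phi hsr hsa.le hD hinfl hxb]
  · rw [deriv_Phi hD.ne', if_neg hxb.not_ge, sub_self, max_eq_right]
    exact generator_Phi_nonpos_of_gt hr hs hdel.le hal hD.ne' hinfl hb0.le hxb

/-- Assume αλc > (λ+δ)². With ψ(x) = (r+α)e^{rx} − (s+α)e^{sx},
b = (1/(r−s))·ln(s²(s+α)/(r²(r+α))) (so b > 0), and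
Φ(x) = ψ(x)/ψ'(b) for 0 ≤ x ≤ b, Φ(x) = x − b + ψ(b)/ψ'(b) for x > b, the function Φ is
continuously differentiable on (0,∞) and solves the quasi-variational inequality: for
every x > 0, max{ cΦ'(x) − (λ+δ)Φ(x) + λ∫₀ˣ Φ(x−y)αe^{−αy}dy , 1 − Φ'(x) } = 0. -/
theorem stmt_18 (c lam del al r s b : ℝ) (Φ : ℝ → ℝ)
    (hc : 0 < c) (hlam : 0 < lam) (hdel : 0 < del) (hal : 0 < al)
    (hr : c * r ^ 2 - (lam + del - al * c) * r - al * del = 0)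
    (hs : c * s ^ 2 - (lam + del - al * c) * s - al * del = 0)
    (hs1 : -al < s) (hs2 : s < 0) (hr1 : 0 < r)
    (hcond : al * lam * c > (lam + del) ^ 2)
    (hb : b = (1 / (r - s)) * Real.log (s ^ 2 * (s + al) / (r ^ 2 * (r + al))))
    (hΦ : ∀ x, Φ x =
      if x ≤ b then
        ((r + al) * Real.exp (r * x) - (s + al) * Real.exp (s * x))
          / (r * (r + al) * Real.exp (r * b) - s * (s + al) * Real.exp (s * b))
      else
        x - b + ((r + al) * Real.exp (r * b) - (s + al) * Real.exp (s * b))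
          / (r * (r + al) * Real.exp (r * b) - s * (s + al) * Real.exp (s * b))) :
    0 < b ∧
    (∀ x > (0:ℝ), DifferentiableAt ℝ Φ x) ∧
    ContinuousOn (deriv Φ) (Set.Ioi 0) ∧
    ∀ x > (0:ℝ),
      max (c * deriv Φ x - (lam + del) * Φ x
          + lam * ∫ y in (0:ℝ)..x, Φ (x - y) * (al * Real.exp (-al * y)))
        (1 - deriv Φ x) = 0 :=
  stmt_18_general c lam del al r s b Φ hc hdel hal hr hs hs1 hs2 hr1 hcond hb hΦ
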